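/- arXiv:2011.09385 — 5 statements merged into one kernel-verified Lean document; each statement's English description precedes it below -/
import Mathlib

section
/- Let G be a graph with non-backtracking matrix B, and let Ĝ be obtained by identifying one vertex of G with one vertex of a tree T on n vertices. Then the characteristic polynomial of the non-backtracking matrix B̂ of Ĝ equals λ^{2(n−1)} times the characteristic polynomial of B; i.e., the spectrum of B̂ is the spectrum of B together with eigenvalue 0 of multiplicity 2(n−1). -/
open Matrix Polynomial

/-- The non-backtracking matrix of a simple graph, indexed by darts. -/
def nbMatrix {V : Type*} [Fintype V] [DecidableEq V] (G : SimpleGraph V)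
    [DecidableRel G.Adj] : Matrix G.Dart G.Dart ℂ :=
  Matrix.of fun d e => if d.toProd.2 = e.toProd.1 ∧ d.toProd.1 ≠ e.toProd.2 then 1 else 0

/-- The one-point union of `G` and `T`, identifying the vertex `g` of `G` with the
vertex `t` of `T`. -/
def onePointUnion {V U : Type*} (G : SimpleGraph V) (T : SimpleGraph U) (g : V) (t : U) :
    SimpleGraph (V ⊕ {u : U // u ≠ t}) :=
  SimpleGraph.fromRel fun x y =>
    match x, y with
    | Sum.inl a, Sum.inl b => G.Adj a b
    | Sum.inl a, Sum.inr b => a = g ∧ T.Adj t b.1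
    | Sum.inr a, Sum.inl b => b = g ∧ T.Adj t a.1
    | Sum.inr a, Sum.inr b => T.Adj a.1 b.1

/-!
Grade the darts of the one-point union by the depth of their endpoints in `T`, measured from the
attaching vertex: a dart pointing towards the root gets minus the depth of its tail, every other
dart the depth of its head. Since a tree vertex has exactly one neighbour closer to the root, a
non-backtracking step strictly increases the grade unless both darts lie in `G`, where the grade
is `0`. Hence the non-backtracking matrix is block triangular, every diagonal block except the
grade-`0` one is zero, the grade-`0` block is the non-backtracking matrix of `G`, and the darts
of nonzero grade are the `2(n - 1)` darts of `T`.
-/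

open Finset in
theorem Matrix.charpoly_eq_X_pow_mul_charpoly_toSquareBlock {R n α : Type*} [CommRing R]
    [Fintype n] [DecidableEq n] [LinearOrder α] {M : Matrix n n R} {b : n → α} {a : α}
    (hM : ∀ i j, M i j ≠ 0 → b i < b j ∨ b i = a ∧ b j = a) :
    M.charpoly = X ^ Fintype.card {i // b i ≠ a} * (M.toSquareBlock b a).charpoly := by
  have htri : M.BlockTriangular b := fun i j hji => by
    by_contra h
    rcases hM i j h with h' | ⟨h₁, h₂⟩
    · exact lt_asymm hji h'
    · exact hji.ne (h₂.trans h₁.symm)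
  have hblock (c : α) (hc : c ≠ a) : M.toSquareBlock b c = 0 := by
    ext ⟨i, hi⟩ ⟨j, hj⟩
    by_contra h
    rcases hM i j h with h' | ⟨h₁, -⟩
    · exact h'.ne (hi.trans hj.symm)
    · exact hc (hi.symm.trans h₁)
  have hfiber : ∑ c ∈ (image b univ).erase a, #{i | b i = c} = #{i | b i ≠ a} := by
    rw [card_eq_sum_card_fiberwise (f := b) (t := (image b univ).erase a)
      fun i hi => by simpa using hi]
    refine sum_congr rfl fun c hc => ?_
    rw [filter_filter]
    congr 1
    ext i
    simp only [mem_filter, mem_univ, true_and]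
    exact ⟨fun h => ⟨h ▸ ne_of_mem_erase hc, h⟩, fun h => h.2⟩
  classical
  rw [htri.charpoly, ← prod_insert_of_eq_one_if_notMem (a := a) fun ha => ?_,
    ← mul_prod_erase _ _ (mem_insert_self a _), erase_insert_eq_erase, mul_comm,
    prod_congr rfl fun c hc => by rw [hblock c (ne_of_mem_erase hc), charpoly_zero],
    prod_pow_eq_pow_sum]
  · simp only [Fintype.card_subtype, hfiber]
  · have : IsEmpty {i // b i = a} := ⟨fun i => ha (mem_image.mpr ⟨i, mem_univ _, i.2⟩)⟩
    exact charpoly_isEmpty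

namespace SimpleGraph

theorem IsTree.eq_of_adj_of_dist_lt {U : Type*} {T : SimpleGraph U} (hT : T.IsTree)
    (t : U) {x y m : U} (hx : T.Adj x m) (hy : T.Adj y m) (hxm : T.dist t x < T.dist t m)
    (hym : T.dist t y < T.dist t m) : x = y := by
  obtain ⟨p, hp⟩ := hT.connected.exists_walk_length_eq_dist t x
  obtain ⟨q, hq⟩ := hT.connected.exists_walk_length_eq_dist t y
  have hpm : (p.concat hx).length = T.dist t m := by
    have := hT.dist_eq_dist_add_one_of_adj t hx
    rw [Walk.length_concat]
    omega
  have hqm : (q.concat hy).length = T.dist t m := by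
    have := hT.dist_eq_dist_add_one_of_adj t hy
    rw [Walk.length_concat]
    omega
  have hpq := (hT.isAcyclic.subsingleton_path t m).elim
    ⟨_, Walk.isPath_of_length_eq_dist _ hpm⟩ ⟨_, Walk.isPath_of_length_eq_dist _ hqm⟩
  exact (Walk.concat_inj (congrArg Subtype.val hpq)).1

theorem Hom.mapDart_injective {V W : Type*} {G : SimpleGraph V} {H : SimpleGraph W}
    (f : G →g H) (hf : Function.Injective f) : Function.Injective f.mapDart := fun d e hde => by
  obtain ⟨h₁, h₂⟩ := Prod.mk.inj (congrArg Dart.toProd hde)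
  exact Dart.ext _ _ (Prod.ext (hf h₁) (hf h₂))

end SimpleGraph

open SimpleGraph

section NonBacktracking

variable {V W : Type*} {G : SimpleGraph V} {H : SimpleGraph W}

def nbGrade (dep : W → ℕ) (d : H.Dart) : ℤ :=
  if dep d.snd < dep d.fst then -dep d.fst else dep d.snd

theorem nbGrade_eq_zero_iff {dep : W → ℕ} {d : H.Dart} :
    nbGrade dep d = 0 ↔ dep d.fst = 0 ∧ dep d.snd = 0 := by
  unfold nbGrade
  split_ifs <;> omega

variable [Fintype V] [DecidableEq V] [Fintype W] [DecidableEq W]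
  [DecidableRel G.Adj] [DecidableRel H.Adj]

theorem nbGrade_lt_or_eq_zero_of_nbMatrix_ne_zero {dep : W → ℕ}
    (hlevel : ∀ x y, H.Adj x y → dep x = dep y → dep x = 0)
    (hparent : ∀ x y m, H.Adj x m → H.Adj y m → dep x < dep m → dep y < dep m → x = y)
    {d e : H.Dart} (hde : nbMatrix H d e ≠ 0) :
    nbGrade dep d < nbGrade dep e ∨ nbGrade dep d = 0 ∧ nbGrade dep e = 0 := by
  obtain ⟨⟨x, y⟩, hxy⟩ := d
  obtain ⟨⟨y', z⟩, hyz⟩ := e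
  dsimp only at hxy hyz
  obtain ⟨rfl, hxz⟩ : y = y' ∧ x ≠ z := by
    by_contra h
    exact hde (by simp [nbMatrix, h])
  have h₁ := hlevel _ _ hxy
  have h₂ := hlevel _ _ hyz
  have h₃ : ¬(dep x < dep y ∧ dep z < dep y) := fun h =>
    hxz (hparent _ _ _ hxy hyz.symm h.1 h.2)
  unfold nbGrade
  dsimp only
  split_ifs <;> omega

theorem nbMatrix_mapDart (f : G →g H) (hf : Function.Injective f) (d e : G.Dart) :
    nbMatrix H (f.mapDart d) (f.mapDart e) = nbMatrix G d e := by
  simp [nbMatrix, hf.eq_iff]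

theorem charpoly_toSquareBlock_nbMatrix_of_range_mapDart {α : Type*} [DecidableEq α]
    (f : G →g H) (hf : Function.Injective f) (b : H.Dart → α) (a : α)
    (hb : ∀ d, b d = a ↔ d ∈ Set.range f.mapDart) :
    ((nbMatrix H).toSquareBlock b a).charpoly = (nbMatrix G).charpoly := by
  let e : G.Dart ≃ {d // b d = a} :=
    (Equiv.ofInjective _ (f.mapDart_injective hf)).trans
      (Equiv.subtypeEquivRight fun d => (hb d).symm)
  have : (nbMatrix H).toSquareBlock b a = reindex e e (nbMatrix G) := by
    ext i j
    obtain ⟨i, rfl⟩ := e.surjective i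
    obtain ⟨j, rfl⟩ := e.surjective j
    rw [toSquareBlock_def, reindex_apply, submatrix_apply, Equiv.symm_apply_apply,
      Equiv.symm_apply_apply]
    exact nbMatrix_mapDart f hf i j
  rw [this, charpoly_reindex]

end NonBacktracking

namespace onePointUnion

variable {V U : Type*} {G : SimpleGraph V} {T : SimpleGraph U} {g : V} {t : U}

@[simp] theorem adj_inl_inl {a b : V} :
    (onePointUnion G T g t).Adj (.inl a) (.inl b) ↔ G.Adj a b := by
  simpa [onePointUnion, or_iff_left_of_imp Adj.symm] using Adj.ne

@[simp] theorem adj_inl_inr {a : V} {u : {u : U // u ≠ t}} :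
    (onePointUnion G T g t).Adj (.inl a) (.inr u) ↔ a = g ∧ T.Adj t u := by
  simp [onePointUnion]

@[simp] theorem adj_inr_inl {u : {u : U // u ≠ t}} {a : V} :
    (onePointUnion G T g t).Adj (.inr u) (.inl a) ↔ a = g ∧ T.Adj t u := by
  simp [onePointUnion]

@[simp] theorem adj_inr_inr {u v : {u : U // u ≠ t}} :
    (onePointUnion G T g t).Adj (.inr u) (.inr v) ↔ T.Adj u v := by
  simpa [onePointUnion, Subtype.ext_iff, or_iff_left_of_imp Adj.symm] using Adj.ne

variable (G T g t) in
def inlEmbedding : G ↪g onePointUnion G T g t := ⟨Function.Embedding.inl, adj_inl_inl⟩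

@[simp] theorem inlEmbedding_apply (a : V) : inlEmbedding G T g t a = .inl a := rfl

variable (T t) in
noncomputable def depth : V ⊕ {u : U // u ≠ t} → ℕ :=
  Sum.elim (fun _ => 0) fun u => T.dist t u

@[simp] theorem depth_inl (a : V) : depth T t (.inl a : V ⊕ {u : U // u ≠ t}) = 0 := rfl

theorem nbGrade_mapDart_inlEmbedding (d : G.Dart) :
    nbGrade (depth T t) ((inlEmbedding G T g t).toHom.mapDart d) = 0 :=
  nbGrade_eq_zero_iff.mpr ⟨rfl, rfl⟩

variable [DecidableEq U]

variable (G T g t) in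
def treeEmbedding : T ↪g onePointUnion G T g t where
  toFun u := if h : u = t then .inl g else .inr ⟨u, h⟩
  inj' u v huv := by
    by_cases hu : u = t <;> by_cases hv : v = t <;> simp_all
  map_rel_iff' {u v} := by
    by_cases hu : u = t <;> by_cases hv : v = t <;> simp_all [adj_comm]

@[simp] theorem treeEmbedding_self : treeEmbedding G T g t t = .inl g :=
  dif_pos rfl

@[simp] theorem treeEmbedding_val (u : {u : U // u ≠ t}) : treeEmbedding G T g t u = .inr u :=
  dif_neg u.2

@[simp] theorem depth_treeEmbedding (u : U) :
    depth T t (treeEmbedding G T g t u) = T.dist t u := by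
  by_cases hu : u = t
  · subst hu
    simp
  · simp [treeEmbedding, hu, depth]

theorem adj_cases {x y : V ⊕ {u : U // u ≠ t}} (h : (onePointUnion G T g t).Adj x y) :
    (∃ a b, G.Adj a b ∧ inlEmbedding G T g t a = x ∧ inlEmbedding G T g t b = y) ∨
      ∃ u v, T.Adj u v ∧ treeEmbedding G T g t u = x ∧ treeEmbedding G T g t v = y := by
  rcases x with a | u <;> rcases y with b | v
  · exact .inl ⟨a, b, adj_inl_inl.mp h, rfl, rfl⟩
  · obtain ⟨rfl, hv⟩ := adj_inl_inr.mp h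
    exact .inr ⟨t, v, hv, by simp, by simp⟩
  · obtain ⟨rfl, hu⟩ := adj_inr_inl.mp h
    exact .inr ⟨u, t, hu.symm, by simp, by simp⟩
  · exact .inr ⟨u, v, adj_inr_inr.mp h, by simp, by simp⟩

theorem dart_mem_range_inlEmbedding_or_treeEmbedding (d : (onePointUnion G T g t).Dart) :
    d ∈ Set.range (inlEmbedding G T g t).toHom.mapDart ∨
      d ∈ Set.range (treeEmbedding G T g t).toHom.mapDart := by
  rcases adj_cases d.adj with ⟨a, b, hab, ha, hb⟩ | ⟨u, v, huv, hu, hv⟩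
  · exact .inl ⟨⟨(a, b), hab⟩, Dart.ext _ _ (Prod.ext ha hb)⟩
  · exact .inr ⟨⟨(u, v), huv⟩, Dart.ext _ _ (Prod.ext hu hv)⟩

variable (hT : T.IsTree)
include hT

theorem depth_eq_zero_of_adj {x y : V ⊕ {u : U // u ≠ t}} (h : (onePointUnion G T g t).Adj x y)
    (hxy : depth T t x = depth T t y) : depth T t x = 0 := by
  rcases adj_cases h with ⟨a, b, -, rfl, rfl⟩ | ⟨u, v, huv, rfl, rfl⟩
  · rfl
  · simp only [depth_treeEmbedding] at hxy
    exact absurd hxy (hT.dist_ne_of_adj t huv)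

theorem eq_of_adj_of_depth_lt {x y m : V ⊕ {u : U // u ≠ t}}
    (hx : (onePointUnion G T g t).Adj x m) (hy : (onePointUnion G T g t).Adj y m)
    (hxm : depth T t x < depth T t m) (hym : depth T t y < depth T t m) : x = y := by
  rcases adj_cases hx with ⟨a, b, -, rfl, rfl⟩ | ⟨u, w, huw, rfl, rfl⟩
  · simp at hxm
  rcases adj_cases hy with ⟨a, b, -, rfl, hb⟩ | ⟨v, w', hvw, rfl, hw⟩
  · rw [← hb] at hym
    simp at hym
  obtain rfl := (treeEmbedding G T g t).injective hw
  simp only [depth_treeEmbedding] at hxm hym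
  rw [hT.eq_of_adj_of_dist_lt t huw hvw hxm hym]

theorem nbGrade_mapDart_treeEmbedding_ne_zero (d : T.Dart) :
    nbGrade (depth T t) ((treeEmbedding G T g t).toHom.mapDart d) ≠ 0 := by
  rw [Ne, nbGrade_eq_zero_iff]
  rintro ⟨h₁, h₂⟩
  simp only [Hom.mapDart_apply, Prod.map_fst, Prod.map_snd, RelEmbedding.coe_toRelHom,
    depth_treeEmbedding] at h₁ h₂
  exact hT.dist_ne_of_adj t d.adj (h₁.trans h₂.symm)

theorem nbGrade_eq_zero_iff_mem_range_inlEmbedding (d : (onePointUnion G T g t).Dart) :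
    nbGrade (depth T t) d = 0 ↔ d ∈ Set.range (inlEmbedding G T g t).toHom.mapDart := by
  rcases dart_mem_range_inlEmbedding_or_treeEmbedding d with ⟨d₀, rfl⟩ | ⟨d₀, rfl⟩
  · exact iff_of_true (nbGrade_mapDart_inlEmbedding d₀) ⟨d₀, rfl⟩
  · refine iff_of_false (nbGrade_mapDart_treeEmbedding_ne_zero hT d₀) ?_
    rintro ⟨d₁, hd⟩
    exact nbGrade_mapDart_treeEmbedding_ne_zero hT d₀ (hd ▸ nbGrade_mapDart_inlEmbedding d₁)

theorem nbGrade_ne_zero_iff_mem_range_treeEmbedding (d : (onePointUnion G T g t).Dart) :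
    nbGrade (depth T t) d ≠ 0 ↔ d ∈ Set.range (treeEmbedding G T g t).toHom.mapDart := by
  rcases dart_mem_range_inlEmbedding_or_treeEmbedding d with ⟨d₀, rfl⟩ | ⟨d₀, rfl⟩
  · refine iff_of_false (not_not.mpr (nbGrade_mapDart_inlEmbedding d₀)) ?_
    rintro ⟨d₁, hd⟩
    exact nbGrade_mapDart_treeEmbedding_ne_zero hT d₁ (hd ▸ nbGrade_mapDart_inlEmbedding d₀)
  · exact iff_of_true (nbGrade_mapDart_treeEmbedding_ne_zero hT d₀) ⟨d₀, rfl⟩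

theorem card_nbGrade_ne_zero [Fintype V] [DecidableEq V] [Fintype U] [DecidableRel T.Adj]
    [DecidableRel (onePointUnion G T g t).Adj] :
    Fintype.card {d : (onePointUnion G T g t).Dart // nbGrade (depth T t) d ≠ 0} =
      2 * (Fintype.card U - 1) := by
  rw [Fintype.card_congr
      (Equiv.subtypeEquivRight (nbGrade_ne_zero_iff_mem_range_treeEmbedding hT)),
    Set.card_range_of_injective
      ((treeEmbedding G T g t).toHom.mapDart_injective (treeEmbedding G T g t).injective),
    dart_card_eq_twice_card_edges, ← hT.card_edgeFinset, Nat.add_sub_cancel]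

end onePointUnion

open onePointUnion in
/-- If `Ĝ` is obtained from `G` by identifying one vertex of `G` with one vertex of a tree `T`
on `n` vertices, then the characteristic polynomial of the non-backtracking matrix of `Ĝ`
is `λ^(2(n-1))` times that of the non-backtracking matrix of `G`. -/
theorem charpoly_nbMatrix_onePointUnion_tree {V U : Type*} [Fintype V] [DecidableEq V]
    [Fintype U] [DecidableEq U] (G : SimpleGraph V) [DecidableRel G.Adj]
    (T : SimpleGraph U) [DecidableRel T.Adj] (hT : T.IsTree) (g : V) (t : U) :
    letI : DecidableRel (onePointUnion G T g t).Adj := Classical.decRel _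
    (nbMatrix (onePointUnion G T g t)).charpoly
      = X ^ (2 * (Fintype.card U - 1)) * (nbMatrix G).charpoly := by
  let _ : DecidableRel (onePointUnion G T g t).Adj := Classical.decRel _
  have hgrade (d e : (onePointUnion G T g t).Dart) (hde : nbMatrix _ d e ≠ 0) :=
    nbGrade_lt_or_eq_zero_of_nbMatrix_ne_zero (fun _ _ => depth_eq_zero_of_adj hT)
      (fun _ _ _ => eq_of_adj_of_depth_lt hT) hde
  rw [charpoly_eq_X_pow_mul_charpoly_toSquareBlock hgrade, card_nbGrade_ne_zero hT,
    charpoly_toSquareBlock_nbMatrix_of_range_mapDart _ (inlEmbedding G T g t).injective _ _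
      (nbGrade_eq_zero_iff_mem_range_inlEmbedding hT)]
end

section
/- Let G be a graph formed by identifying one vertex of a graph Ĝ with one vertex of a cycle C_n, and let B be the non-backtracking matrix of G. Then for every j = 0, …, n−1, e^{2πij/n} is an eigenvalue of B. -/
open Matrix Polynomial

/-!
Number the vertices of the cycle `c a` by `a ∈ ℤ/n`, with `c s` the cut vertex, and fix an
additive character `ψ` of `ℤ/n`. Label the dart from `c a` to `c (a + 1)` by `ψ a`, the dart
from `c a` to `c (a - 1)` by `-ψ (2s - a)`, and every other dart by `0`. Following either
orientation of the cycle multiplies the label by `ψ 1`, while at a dart entering `c s` from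
outside the cycle the two continuations `ψ s` and `-ψ (2s - s)` cancel. Hence the labelling is a
`ψ 1`-eigenvector of the non-backtracking matrix, and `ψ 1` ranges over all `n`-th roots of
unity.
-/

theorem Matrix.mem_spectrum_of_mulVec_eq_smul {R ι : Type*} [CommRing R] [Fintype ι]
    [DecidableEq ι] {A : Matrix ι ι R} {μ : R} {v : ι → R} (hv : v ≠ 0)
    (h : A *ᵥ v = μ • v) : μ ∈ spectrum R A := by
  rw [← Matrix.spectrum_toLin']
  exact (Module.End.hasEigenvalue_of_hasEigenvector
    ⟨Module.End.mem_eigenspace_iff.mpr (by simpa using h), hv⟩).mem_spectrum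

theorem nbMatrix_mulVec_apply {V : Type*} [Fintype V] [DecidableEq V] (G : SimpleGraph V)
    [DecidableRel G.Adj] (w : V → V → ℂ) (d : G.Dart) :
    (nbMatrix G *ᵥ fun e => w e.fst e.snd) d =
      ∑ z ∈ G.neighborFinset d.snd with z ≠ d.fst, w d.snd z := by
  simp only [mulVec, dotProduct, nbMatrix, of_apply, ite_mul, one_mul, zero_mul,
    ← Finset.sum_filter]
  refine Finset.sum_bij (fun e _ => e.snd) ?_ ?_ ?_ ?_
  · rintro e he
    simp only [Finset.mem_filter, Finset.mem_univ, true_and] at he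
    simp [he.1, e.adj, Ne.symm he.2]
  · rintro e he e' he' h
    simp only [Finset.mem_filter, Finset.mem_univ, true_and] at he he'
    exact SimpleGraph.Dart.ext _ _ (Prod.ext (he.1.symm.trans he'.1) h)
  · intro z hz
    simp only [Finset.mem_filter, SimpleGraph.mem_neighborFinset] at hz
    exact ⟨⟨(d.snd, z), hz.1⟩, by simp [Ne.symm hz.2], rfl⟩
  · rintro e he
    simp only [Finset.mem_filter, Finset.mem_univ, true_and] at he
    rw [he.1]

section PendantCycle

variable {W A : Type*} [AddCommGroup A]

/-- `c` runs around a cycle of `G` in steps of `δ` and the cycle meets the rest of `G` only in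
`c s`; `δ + δ ≠ 0` says that the cycle has length at least `3`. -/
structure IsPendantCycle (G : SimpleGraph W) (c : A → W) (δ s : A) : Prop where
  injective : c.Injective
  adj_add : ∀ a, G.Adj (c a) (c (a + δ))
  eq_or_eq_of_adj : ∀ a x, G.Adj x (c a) → a = s ∨ x = c (a + δ) ∨ x = c (a - δ)
  add_self_ne_zero : δ + δ ≠ 0

variable {G : SimpleGraph W} {c : A → W} {δ s : A}

theorem IsPendantCycle.add_ne_sub (hG : IsPendantCycle G c δ s) (a : A) :
    a + δ ≠ a - δ := by
  simpa [sub_eq_add_neg, eq_neg_iff_add_eq_zero] using hG.add_self_ne_zero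

variable [DecidableEq W]

noncomputable def pendantCycleWeight (c : A → W) (δ s : A) (ψ : AddChar A ℂ) :
    W → W → ℂ :=
  Function.extend c
    (fun a y =>
      (if y = c (a + δ) then ψ a else 0) - (if y = c (a - δ) then ψ (s + s - a) else 0))
    0

variable (ψ : AddChar A ℂ)

theorem pendantCycleWeight_apply (hc : c.Injective) (a : A) (y : W) :
    pendantCycleWeight c δ s ψ (c a) y =
      (if y = c (a + δ) then ψ a else 0) - (if y = c (a - δ) then ψ (s + s - a) else 0) :=
  congrFun (hc.extend_apply _ _ a) y

theorem exists_of_pendantCycleWeight_ne_zero (hc : c.Injective) {x y : W}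
    (h : pendantCycleWeight c δ s ψ x y ≠ 0) :
    ∃ a, x = c a ∧ (y = c (a + δ) ∨ y = c (a - δ)) := by
  by_cases hx : ∃ a, c a = x
  · obtain ⟨a, rfl⟩ := hx
    rw [pendantCycleWeight_apply ψ hc] at h
    refine ⟨a, rfl, ?_⟩
    by_contra! hy
    simp [hy.1, hy.2] at h
  · exact absurd (congrFun (Function.extend_apply' _ _ _ hx) y) h

variable [Fintype W] [DecidableRel G.Adj]

namespace IsPendantCycle

variable (hG : IsPendantCycle G c δ s)
include hG

theorem sum_neighborFinset_pendantCycleWeight (a : A) (x : W) :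
    ∑ z ∈ G.neighborFinset (c a) with z ≠ x, pendantCycleWeight c δ s ψ (c a) z =
      (if x = c (a + δ) then 0 else ψ a) - (if x = c (a - δ) then 0 else ψ (s + s - a)) := by
  have hback : G.Adj (c a) (c (a - δ)) := by simpa using (hG.adj_add (a - δ)).symm
  simp only [pendantCycleWeight_apply ψ hG.injective, Finset.sum_sub_distrib,
    Finset.sum_ite_eq', Finset.mem_filter, SimpleGraph.mem_neighborFinset, hG.adj_add, hback,
    true_and, ite_not, eq_comm]

theorem sum_neighborFinset_pendantCycleWeight_eq_mul {a : A} {x : W} (hx : G.Adj x (c a)) :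
    ∑ z ∈ G.neighborFinset (c a) with z ≠ x, pendantCycleWeight c δ s ψ (c a) z =
      ψ δ * pendantCycleWeight c δ s ψ x (c a) := by
  have hc := hG.injective
  rw [hG.sum_neighborFinset_pendantCycleWeight ψ]
  by_cases hxn : x = c (a + δ)
  · subst hxn
    have h₁ : a ≠ a + δ + δ := by simpa [add_assoc] using hG.add_self_ne_zero
    simp only [pendantCycleWeight_apply ψ hc, hc.eq_iff, hG.add_ne_sub, h₁, add_sub_cancel_right]
    simp only [if_true, if_false, zero_sub, mul_neg, ← AddChar.map_add_eq_mul]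
    congr 2
    abel
  by_cases hxp : x = c (a - δ)
  · subst hxp
    have h₁ : a ≠ a - δ - δ := by simpa [sub_sub, eq_comm (a := a)] using hG.add_self_ne_zero
    simp only [pendantCycleWeight_apply ψ hc, hc.eq_iff, (hG.add_ne_sub a).symm, h₁,
      sub_add_cancel]
    simp only [if_true, if_false, sub_zero, ← AddChar.map_add_eq_mul]
    congr 1
    abel
  -- the dart enters the cut vertex from outside the cycle
  obtain rfl : a = s := (hG.eq_or_eq_of_adj a x hx).resolve_right (not_or.mpr ⟨hxn, hxp⟩)
  have hw : pendantCycleWeight c δ a ψ x (c a) = 0 := by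
    by_contra hw
    obtain ⟨b, rfl, hb⟩ := exists_of_pendantCycleWeight_ne_zero ψ hc hw
    rcases hb with hb | hb <;> rw [hc.eq_iff] at hb <;> subst hb
    · exact hxp (by simp)
    · exact hxn (by simp)
  rw [if_neg hxn, if_neg hxp, hw, add_sub_cancel_right, sub_self, mul_zero]

theorem nbMatrix_mulVec_pendantCycleWeight :
    nbMatrix G *ᵥ (fun e => pendantCycleWeight c δ s ψ e.fst e.snd) =
      ψ δ • fun e => pendantCycleWeight c δ s ψ e.fst e.snd := by
  ext ⟨⟨x, y⟩, hxy⟩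
  rw [nbMatrix_mulVec_apply, Pi.smul_apply, smul_eq_mul]
  by_cases hy : ∃ a, c a = y
  · obtain ⟨a, rfl⟩ := hy
    exact hG.sum_neighborFinset_pendantCycleWeight_eq_mul ψ hxy
  · simp only [not_exists] at hy
    have hw (u z : W) (hu : y = u ∨ y = z) : pendantCycleWeight c δ s ψ u z = 0 := by
      by_contra hw
      obtain ⟨b, rfl, hz⟩ := exists_of_pendantCycleWeight_ne_zero ψ hG.injective hw
      rcases hu with rfl | rfl
      · exact hy b rfl
      · rcases hz with h | h <;> exact hy _ h.symm
    rw [Finset.sum_eq_zero fun z _ => hw y z (.inl rfl), hw x y (.inr rfl), mul_zero]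

theorem apply_mem_spectrum_nbMatrix : ψ δ ∈ spectrum ℂ (nbMatrix G) := by
  refine Matrix.mem_spectrum_of_mulVec_eq_smul (fun h => ?_)
    (hG.nbMatrix_mulVec_pendantCycleWeight ψ)
  have h₀ : pendantCycleWeight c δ s ψ (c 0) (c (0 + δ)) = 0 :=
    congrFun h ⟨(c 0, c (0 + δ)), hG.adj_add 0⟩
  rw [pendantCycleWeight_apply ψ hG.injective, if_pos rfl,
    if_neg (hG.injective.ne (hG.add_ne_sub 0)), sub_zero, AddChar.map_zero_eq_one] at h₀
  exact one_ne_zero h₀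

end IsPendantCycle

end PendantCycle

section OnePointUnion

variable {V U : Type*} [DecidableEq U] (G : SimpleGraph V) (T : SimpleGraph U) (g : V) (t : U)

def onePointUnionIncl (u : U) : V ⊕ {u : U // u ≠ t} :=
  if h : u = t then .inl g else .inr ⟨u, h⟩

theorem onePointUnionIncl_injective : (onePointUnionIncl g t).Injective := by
  intro a b h
  unfold onePointUnionIncl at h
  split_ifs at h with ha hb hb
  · exact ha.trans hb.symm
  · exact congrArg Subtype.val (Sum.inr_injective h)

theorem onePointUnion_adj_incl_incl {a b : U} :
    (onePointUnion G T g t).Adj (onePointUnionIncl g t a) (onePointUnionIncl g t b) ↔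
      T.Adj a b := by
  unfold onePointUnionIncl
  split_ifs with ha hb hb <;> simp [onePointUnion, ha, hb, T.adj_comm t, T.adj_comm b a]
  exact fun h => h.ne

theorem eq_or_exists_of_onePointUnion_adj_incl {x : V ⊕ {u : U // u ≠ t}} {b : U}
    (h : (onePointUnion G T g t).Adj x (onePointUnionIncl g t b)) :
    b = t ∨ ∃ a, x = onePointUnionIncl g t a ∧ T.Adj a b := by
  refine or_iff_not_imp_left.mpr fun hb => ?_
  rw [onePointUnionIncl, dif_neg hb] at h
  rcases x with v | ⟨u, hu⟩
  · obtain ⟨rfl, hadj⟩ : v = g ∧ T.Adj t b := by simpa [onePointUnion] using h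
    exact ⟨t, by simp [onePointUnionIncl], hadj⟩
  · have hadj : T.Adj u b := by simpa [onePointUnion, T.adj_comm b] using h.2
    exact ⟨u, by simp [onePointUnionIncl, hu], hadj⟩

end OnePointUnion

namespace SimpleGraph

theorem cycleGraph_adj_add_one {n : ℕ} (k : Fin (n + 2)) : (cycleGraph (n + 2)).Adj k (k + 1) :=
  cycleGraph_adj.mpr (.inr (add_sub_cancel_left k 1))

theorem eq_add_one_or_eq_sub_one_of_cycleGraph_adj {n : ℕ} {a b : Fin (n + 2)}
    (h : (cycleGraph (n + 2)).Adj a b) : a = b + 1 ∨ a = b - 1 := by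
  have : a ∈ (cycleGraph (n + 2)).neighborSet b := h.symm
  rw [cycleGraph_neighborSet] at this
  exact this.symm

end SimpleGraph

theorem isPendantCycle_onePointUnion_cycleGraph {V : Type*} (G : SimpleGraph V) (g : V) (n : ℕ)
    (t : Fin (n + 3)) :
    IsPendantCycle (onePointUnion G (SimpleGraph.cycleGraph (n + 3)) g t)
      (onePointUnionIncl g t) 1 t where
  injective := onePointUnionIncl_injective g t
  adj_add k := (onePointUnion_adj_incl_incl G _ g t).mpr (SimpleGraph.cycleGraph_adj_add_one k)
  eq_or_eq_of_adj b x h := by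
    obtain hb | ⟨a, rfl, hab⟩ := eq_or_exists_of_onePointUnion_adj_incl G _ g t h
    · exact .inl hb
    · obtain rfl | rfl := SimpleGraph.eq_add_one_or_eq_sub_one_of_cycleGraph_adj hab
      exacts [.inr (.inl rfl), .inr (.inr rfl)]
  add_self_ne_zero := by simp [Fin.ext_iff, Fin.val_add, Nat.mod_eq_of_lt]

theorem roots_of_unity_mem_spectrum_nbMatrix_onePointUnion_cycle_general {V : Type*} [Fintype V]
    [DecidableEq V] (Ghat : SimpleGraph V) (n : ℕ) (hn : 3 ≤ n)
    (g : V) (t : Fin n) :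
    letI : DecidableRel (onePointUnion Ghat (SimpleGraph.cycleGraph n) g t).Adj :=
      Classical.decRel _
    ∀ j : ℕ, j < n →
      Complex.exp (2 * Real.pi * Complex.I * j / n) ∈
        spectrum ℂ (nbMatrix (onePointUnion Ghat (SimpleGraph.cycleGraph n) g t)) := by
  intro j _
  obtain ⟨m, rfl⟩ : ∃ m, n = m + 3 := ⟨n - 3, by omega⟩
  classical
  simpa [ZMod.stdAddChar_apply, ZMod.toCircle_natCast] using
    (isPendantCycle_onePointUnion_cycleGraph Ghat g m t).apply_mem_spectrum_nbMatrix
      ((ZMod.stdAddChar.mulShift (j : ZMod (m + 3))).compAddMonoidHom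
        (ZMod.finEquiv (m + 3)).toAddEquiv.toAddMonoidHom)

/-- If `G` is formed by identifying one vertex of a graph `Ĝ` with one vertex of the cycle
`C_n`, then every `n`-th root of unity `e^{2πij/n}`, `j = 0, …, n-1`, is an eigenvalue of the
non-backtracking matrix of `G`. -/
theorem roots_of_unity_mem_spectrum_nbMatrix_onePointUnion_cycle {V : Type*} [Fintype V]
    [DecidableEq V] (Ghat : SimpleGraph V) [DecidableRel Ghat.Adj] (n : ℕ) (hn : 3 ≤ n)
    (g : V) (t : Fin n) :
    letI : DecidableRel (onePointUnion Ghat (SimpleGraph.cycleGraph n) g t).Adj :=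
      Classical.decRel _
    ∀ j : ℕ, j < n →
      Complex.exp (2 * Real.pi * Complex.I * j / n) ∈
        spectrum ℂ (nbMatrix (onePointUnion Ghat (SimpleGraph.cycleGraph n) g t)) :=
  roots_of_unity_mem_spectrum_nbMatrix_onePointUnion_cycle_general Ghat n hn g t
end

section
/- For any graph G, 1 is an eigenvalue of K = [[A, D−I],[−I, 0]], and its geometric multiplicity equals the number of connected components of G. -/
/-!
Writing `z = (x, y)`, one computes `(K - 1) z = (L y + (A - 1) (x + y), -(x + y))`, so the
1-eigenvectors of `K` are exactly the vectors `(-y, y)` with `L y = 0`, and `y ↦ (-y, y)` is an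
isomorphism from the kernel of `L` onto that of `K - 1`. Since `L` is real, a complex `y` lies in
its kernel iff its real and imaginary parts do, i.e. iff `y` is constant on connected components.
Such functions are pulled back from functions on the set of components, so they form a space whose
dimension is the number of components, which is positive because `V` is nonempty.
-/

open Matrix

/-- The matrix `K = [[A, D-I], [-I, 0]]`. -/
def Kmatrix {V : Type*} [Fintype V] [DecidableEq V] (G : SimpleGraph V)
    [DecidableRel G.Adj] : Matrix (V ⊕ V) (V ⊕ V) ℂ :=
  Matrix.fromBlocks (G.adjMatrix ℂ) (Matrix.diagonal (fun v => (G.degree v : ℂ)) - 1) (-1) 0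

namespace Matrix

variable {m n : Type*} [Fintype n]

lemma re_map_ofReal_mulVec (M : Matrix m n ℝ) (x : n → ℂ) (i : m) :
    ((M.map Complex.ofReal *ᵥ x) i).re = (M *ᵥ fun j ↦ (x j).re) i := by
  simp [mulVec, dotProduct, Complex.re_sum]

lemma im_map_ofReal_mulVec (M : Matrix m n ℝ) (x : n → ℂ) (i : m) :
    ((M.map Complex.ofReal *ᵥ x) i).im = (M *ᵥ fun j ↦ (x j).im) i := by
  simp [mulVec, dotProduct, Complex.im_sum]

lemma map_ofReal_mulVec_eq_zero_iff (M : Matrix m n ℝ) (x : n → ℂ) :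
    M.map Complex.ofReal *ᵥ x = 0 ↔
      M *ᵥ (fun j ↦ (x j).re) = 0 ∧ M *ᵥ (fun j ↦ (x j).im) = 0 := by
  simp only [funext_iff, Pi.zero_apply, Complex.ext_iff, re_map_ofReal_mulVec,
    im_map_ofReal_mulVec, Complex.zero_re, Complex.zero_im, forall_and]

lemma mem_spectrum_iff_ker_toLin'_ne_bot {K : Type*} [Field K] [DecidableEq n]
    (M : Matrix n n K) (μ : K) :
    μ ∈ spectrum K M ↔ LinearMap.ker (toLin' (M - μ • 1)) ≠ ⊥ := by
  rw [← spectrum_toLin', ← Module.End.hasEigenvalue_iff_mem_spectrum,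
    Module.End.hasEigenvalue_iff, Module.End.eigenspace_def, map_sub, map_smul, toLin'_one]
  rfl

end Matrix

namespace LinearMap

variable (R M ι : Type*) [Semiring R] [AddCommGroup M] [Module R M]

def sumElimNegSelf : (ι → M) →ₗ[R] (ι ⊕ ι → M) where
  toFun y := Sum.elim (-y) y
  map_add' a b := by ext (i | i) <;> simp [add_comm]
  map_smul' c a := by ext (i | i) <;> simp

variable {R M ι}

@[simp]
lemma sumElimNegSelf_apply (y : ι → M) : sumElimNegSelf R M ι y = Sum.elim (-y) y := rfl

lemma sumElimNegSelf_injective : Function.Injective (sumElimNegSelf R M ι) :=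
  fun _ _ h ↦ funext fun i ↦ congrFun h (Sum.inr i)

end LinearMap

namespace SimpleGraph

variable {V : Type*} (G : SimpleGraph V)

lemma mem_range_funLeft_connectedComponentMk_iff {R M : Type*} [Semiring R] [AddCommMonoid M]
    [Module R M] (x : V → M) :
    x ∈ LinearMap.range (LinearMap.funLeft R M G.connectedComponentMk) ↔
      ∀ i j, G.Reachable i j → x i = x j := by
  constructor
  · rintro ⟨f, rfl⟩ i j hij
    exact congrArg f (ConnectedComponent.sound hij)
  · intro hx
    exact ⟨Quot.lift x hx, rfl⟩

variable [Fintype V] [DecidableEq V] [DecidableRel G.Adj]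

lemma map_ofReal_lapMatrix : (G.lapMatrix ℝ).map Complex.ofReal = G.lapMatrix ℂ := by
  ext i j
  simp [lapMatrix, degMatrix, adjMatrix, diagonal, apply_ite Complex.ofReal]

lemma lapMatrix_complex_mulVec_eq_zero_iff_forall_reachable (x : V → ℂ) :
    G.lapMatrix ℂ *ᵥ x = 0 ↔ ∀ i j, G.Reachable i j → x i = x j := by
  simp only [← map_ofReal_lapMatrix, Matrix.map_ofReal_mulVec_eq_zero_iff,
    lapMatrix_mulVec_eq_zero_iff_forall_reachable, Complex.ext_iff, ← forall_and]

lemma ker_toLin'_lapMatrix_complex :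
    LinearMap.ker (toLin' (G.lapMatrix ℂ)) =
      LinearMap.range (LinearMap.funLeft ℂ ℂ G.connectedComponentMk) := by
  ext x
  rw [LinearMap.mem_ker, toLin'_apply, lapMatrix_complex_mulVec_eq_zero_iff_forall_reachable,
    mem_range_funLeft_connectedComponentMk_iff]

lemma finrank_ker_toLin'_lapMatrix_complex :
    Module.finrank ℂ (LinearMap.ker (toLin' (G.lapMatrix ℂ))) = Nat.card G.ConnectedComponent := by
  rw [ker_toLin'_lapMatrix_complex, LinearMap.finrank_range_of_inj
      (LinearMap.funLeft_injective_of_surjective ℂ ℂ _ fun c ↦ c.exists_rep),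
    Module.finrank_fintype_fun_eq_card, Nat.card_eq_fintype_card]

end SimpleGraph

section Kmatrix

variable {V : Type*} [Fintype V] [DecidableEq V] (G : SimpleGraph V) [DecidableRel G.Adj]

lemma Kmatrix_sub_one :
    Kmatrix G - 1 = fromBlocks (G.adjMatrix ℂ - 1) (G.degMatrix ℂ - 1) (-1) (-1) := by
  rw [Kmatrix, ← fromBlocks_one, sub_eq_add_neg, fromBlocks_neg, fromBlocks_add]
  simp [SimpleGraph.degMatrix, sub_eq_add_neg]

lemma Kmatrix_sub_one_mulVec_sumElim (x y : V → ℂ) :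
    (Kmatrix G - 1) *ᵥ Sum.elim x y =
      Sum.elim (G.lapMatrix ℂ *ᵥ y + (G.adjMatrix ℂ - 1) *ᵥ (x + y)) (-(x + y)) := by
  rw [Kmatrix_sub_one, fromBlocks_mulVec, Sum.elim_comp_inl, Sum.elim_comp_inr]
  simp only [SimpleGraph.lapMatrix, sub_mulVec, mulVec_add, neg_mulVec, one_mulVec]
  congr 1 <;> abel

lemma ker_toLin'_Kmatrix_sub_one :
    LinearMap.ker (toLin' (Kmatrix G - 1)) =
      (LinearMap.ker (toLin' (G.lapMatrix ℂ))).map (LinearMap.sumElimNegSelf ℂ ℂ V) := by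
  ext z
  obtain ⟨x, y, rfl⟩ : ∃ x y, z = Sum.elim x y :=
    ⟨z ∘ Sum.inl, z ∘ Sum.inr, (Sum.elim_comp_inl_inr z).symm⟩
  simp only [LinearMap.mem_ker, toLin'_apply, Kmatrix_sub_one_mulVec_sumElim, Submodule.mem_map,
    LinearMap.sumElimNegSelf_apply, ← Sum.elim_zero_zero, Sum.elim_eq_iff]
  constructor
  · rintro ⟨hL, hxy⟩
    have hx : x + y = 0 := neg_eq_zero.mp hxy
    exact ⟨y, by simpa [hx] using hL, (eq_neg_of_add_eq_zero_left hx).symm, rfl⟩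
  · rintro ⟨w, hw, rfl, rfl⟩
    simp [hw]

lemma finrank_ker_toLin'_Kmatrix_sub_one :
    Module.finrank ℂ (LinearMap.ker (toLin' (Kmatrix G - 1))) = Nat.card G.ConnectedComponent := by
  rw [ker_toLin'_Kmatrix_sub_one, ← LinearEquiv.finrank_eq (Submodule.equivMapOfInjective _
      LinearMap.sumElimNegSelf_injective _), SimpleGraph.finrank_ker_toLin'_lapMatrix_complex]

end Kmatrix

/-- `1` is an eigenvalue of `K = [[A, D-I], [-I, 0]]`, with geometric multiplicity equal to
the number of connected components of `G`. -/
theorem one_mem_spectrum_Kmatrix {V : Type*} [Fintype V] [DecidableEq V] [Nonempty V]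
    (G : SimpleGraph V) [DecidableRel G.Adj] :
    (1 : ℂ) ∈ spectrum ℂ (Kmatrix G) ∧
    Module.finrank ℂ (LinearMap.ker (Matrix.toLin' (Kmatrix G - 1)))
      = Nat.card G.ConnectedComponent := by
  have hker := finrank_ker_toLin'_Kmatrix_sub_one G
  refine ⟨?_, hker⟩
  rw [mem_spectrum_iff_ker_toLin'_ne_bot, one_smul, ← Submodule.one_le_finrank_iff, hker]
  exact Nat.card_pos
end

section
/- If G is a connected graph with minimum degree at least 2, then every eigenvalue μ of the non-backtracking matrix B satisfies |μ| ≥ 1. -/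
/-!
Let `x` be an eigenvector of `B` for `μ` and `g v = ∑_{d.fst = v} x d`. Since
`(B x) d = g d.snd - x d.symm`, applying `B` twice gives
`(μ ^ 2 - 1) x d = μ g d.snd - g d.fst`. If `g = 0` this forces `μ ^ 2 = 1`. Otherwise pairing
with `conj (g d.fst)` and summing over darts yields the Ihara quadratic
`S μ ^ 2 - a μ + (Q - S) = 0` with `S = ∑ |g v| ^ 2 > 0`, `Q = ∑ deg v |g v| ^ 2 ≥ 2 S` and
`a = ⟨g, A g⟩` real with `|a| ≤ Q`; such a quadratic has no root in the open unit disc.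
-/

open Matrix

open Finset ComplexConjugate

theorem Matrix.exists_mulVec_eq_smul_of_mem_spectrum {K n : Type*} [Field K] [Fintype n]
    [DecidableEq n] {A : Matrix n n K} {μ : K} (hμ : μ ∈ spectrum K A) :
    ∃ x ≠ 0, A *ᵥ x = μ • x := by
  rw [← spectrum_toLin', ← Module.End.hasEigenvalue_iff_mem_spectrum] at hμ
  obtain ⟨x, hx⟩ := hμ.exists_hasEigenvector
  exact ⟨x, hx.2, by simpa using hx.apply_eq_smul⟩

theorem Complex.one_le_norm_of_quadratic_eq_zero {S a Q : ℝ} (hS : 0 < S) (ha : |a| ≤ Q)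
    (hQ : 2 * S ≤ Q) {z : ℂ} (hz : S * z ^ 2 - a * z + (Q - S) = 0) : 1 ≤ ‖z‖ := by
  have hre := congrArg Complex.re hz
  have him := congrArg Complex.im hz
  simp only [pow_two, Complex.sub_re, Complex.add_re, Complex.mul_re, Complex.sub_im,
    Complex.add_im, Complex.mul_im, Complex.ofReal_re, Complex.ofReal_im, Complex.zero_re,
    Complex.zero_im, zero_mul, sub_zero, add_zero] at hre him
  rcases eq_or_ne z.im 0 with hreal | hnonreal
  · -- for `t = |z.re| < 1` the quadratic is at least `(1 - t) (Q - 2 S) + S (1 - t) ^ 2 > 0`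
    rw [hreal, mul_zero, sub_zero] at hre
    rw [← Complex.re_add_im z, hreal, Complex.ofReal_zero, zero_mul, add_zero, Complex.norm_real,
      Real.norm_eq_abs]
    by_contra! hlt
    have har : a * z.re ≤ Q * |z.re| :=
      (le_abs_self _).trans (abs_mul a z.re ▸ mul_le_mul_of_nonneg_right ha (abs_nonneg _))
    nlinarith [sq_abs z.re, mul_nonneg (sub_nonneg.2 hlt.le) (sub_nonneg.2 hQ),
      mul_pos hS (pow_pos (sub_pos.2 hlt) 2)]
  · -- the roots are then conjugate, with product `(Q - S) / S ≥ 1`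
    have ha : a = 2 * S * z.re := mul_right_cancel₀ hnonreal (by linarith)
    have hnormSq : 1 ≤ Complex.normSq z := by
      rw [Complex.normSq_apply]
      subst ha
      nlinarith
    rw [← Complex.sq_norm] at hnormSq
    exact (one_le_sq_iff₀ (norm_nonneg z)).mp hnormSq

namespace SimpleGraph

variable {V : Type*} {G : SimpleGraph V}

theorem Dart.eq_symm_iff {d e : G.Dart} : e = d.symm ↔ e.fst = d.snd ∧ e.snd = d.fst := by
  simp [Dart.ext_iff, Prod.ext_iff]

variable (G) [Fintype V] [DecidableRel G.Adj]

theorem sum_dart_symm {M : Type*} [AddCommMonoid M] (f : G.Dart → M) :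
    ∑ d : G.Dart, f d.symm = ∑ d, f d :=
  Equiv.sum_comp (Dart.symm_involutive.toPerm _) f

theorem conj_sum_dart_conj_mul (f : V → ℂ) :
    conj (∑ d : G.Dart, conj (f d.fst) * f d.snd) = ∑ d : G.Dart, conj (f d.fst) * f d.snd := by
  rw [map_sum, ← G.sum_dart_symm]
  simp [mul_comm]

variable [DecidableEq V]

theorem sum_dart_fst {M : Type*} [AddCommMonoid M] (f : V → M) :
    ∑ d : G.Dart, f d.fst = ∑ v, G.degree v • f v := by
  rw [← Finset.sum_fiberwise' univ (fun d : G.Dart => d.fst) f]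
  simp only [sum_const, dart_fst_fiber_card_eq_degree]

def dartOutSum {M : Type*} [AddCommMonoid M] (x : G.Dart → M) (v : V) : M :=
  ∑ d : G.Dart with d.fst = v, x d

theorem sum_dart_fst_mul {R : Type*} [NonUnitalNonAssocSemiring R] (f : V → R)
    (x : G.Dart → R) : ∑ d, f d.fst * x d = ∑ v, f v * G.dartOutSum x v := by
  rw [← Finset.sum_fiberwise univ (fun d : G.Dart => d.fst)]
  refine sum_congr rfl fun v _ => ?_
  rw [dartOutSum, mul_sum]
  exact sum_congr rfl fun d hd => by rw [(mem_filter.1 hd).2]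

theorem nbMatrix_mulVec_apply (x : G.Dart → ℂ) (d : G.Dart) :
    (nbMatrix G *ᵥ x) d = G.dartOutSum x d.snd - x d.symm := by
  have hsupport : ({e : G.Dart | d.snd = e.fst ∧ d.fst ≠ e.snd} : Finset _)
      = ({e : G.Dart | e.fst = d.snd} : Finset _).erase d.symm := by
    ext e
    simp only [mem_filter, mem_erase, mem_univ, true_and, ne_eq, Dart.eq_symm_iff]
    grind
  rw [dartOutSum, ← sum_erase_add _ _ (by simp : d.symm ∈ _), ← hsupport, sum_filter]
  simp [nbMatrix, mulVec, dotProduct, ite_mul]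

theorem norm_sum_dart_conj_mul_le (f : V → ℂ) :
    ‖∑ d : G.Dart, conj (f d.fst) * f d.snd‖ ≤ ∑ v, G.degree v * ‖f v‖ ^ 2 :=
  calc _ ≤ ∑ d : G.Dart, ‖conj (f d.fst) * f d.snd‖ := norm_sum_le _ _
    _ ≤ ∑ d : G.Dart, (‖f d.fst‖ ^ 2 + ‖f d.snd‖ ^ 2) / 2 := sum_le_sum fun d _ => by
      rw [norm_mul, Complex.norm_conj]
      nlinarith [sq_nonneg (‖f d.fst‖ - ‖f d.snd‖)]
    _ = ∑ d : G.Dart, ‖f d.fst‖ ^ 2 := by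
      rw [← sum_div, sum_add_distrib, ← G.sum_dart_symm fun d => ‖f d.snd‖ ^ 2]
      simp
    _ = _ := by simp only [G.sum_dart_fst fun v => ‖f v‖ ^ 2, nsmul_eq_mul]

variable {G} {μ : ℂ} {x : G.Dart → ℂ}

theorem sq_sub_one_mul_eq_of_nbMatrix_mulVec_eq (hx : nbMatrix G *ᵥ x = μ • x) (d : G.Dart) :
    (μ ^ 2 - 1) * x d = μ * G.dartOutSum x d.snd - G.dartOutSum x d.fst := by
  have h (d : G.Dart) : μ * x d = G.dartOutSum x d.snd - x d.symm := by
    rw [← nbMatrix_mulVec_apply, hx, Pi.smul_apply, smul_eq_mul]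
  have h' := h d.symm
  simp only [Dart.symm_symm, Dart.symm_toProd, Prod.snd_swap] at h'
  linear_combination μ * h d - h'

theorem sq_eq_one_of_dartOutSum_eq_zero (hx : nbMatrix G *ᵥ x = μ • x) (hx0 : x ≠ 0)
    (hg : G.dartOutSum x = 0) : μ ^ 2 = 1 := by
  obtain ⟨d, hd⟩ := Function.ne_iff.mp hx0
  have h := sq_sub_one_mul_eq_of_nbMatrix_mulVec_eq hx d
  rw [hg, Pi.zero_apply, Pi.zero_apply, mul_zero, sub_zero] at h
  exact sub_eq_zero.mp ((mul_eq_zero.mp h).resolve_right hd)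

theorem ihara_quadratic_of_nbMatrix_mulVec_eq (hx : nbMatrix G *ᵥ x = μ • x) :
    ((∑ v, ‖G.dartOutSum x v‖ ^ 2 : ℝ) : ℂ) * μ ^ 2
      - (∑ d : G.Dart, conj (G.dartOutSum x d.fst) * G.dartOutSum x d.snd) * μ
      + ((∑ v, G.degree v * ‖G.dartOutSum x v‖ ^ 2 : ℝ)
        - (∑ v, ‖G.dartOutSum x v‖ ^ 2 : ℝ) : ℂ)
      = 0 := by
  have hL : ∑ d : G.Dart, conj (G.dartOutSum x d.fst) * ((μ ^ 2 - 1) * x d)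
      = (μ ^ 2 - 1) * ∑ v, (‖G.dartOutSum x v‖ : ℂ) ^ 2 := by
    simp_rw [mul_left_comm _ (μ ^ 2 - 1), ← mul_sum,
      G.sum_dart_fst_mul (conj <| G.dartOutSum x ·) x, Complex.conj_mul']
  have hR : ∑ d : G.Dart,
        conj (G.dartOutSum x d.fst) * (μ * G.dartOutSum x d.snd - G.dartOutSum x d.fst)
      = μ * ∑ d : G.Dart, conj (G.dartOutSum x d.fst) * G.dartOutSum x d.snd
        - ∑ v, (G.degree v : ℂ) * ‖G.dartOutSum x v‖ ^ 2 := by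
    simp_rw [mul_sub, sum_sub_distrib, mul_left_comm _ μ, ← mul_sum, Complex.conj_mul',
      G.sum_dart_fst fun v => (‖G.dartOutSum x v‖ : ℂ) ^ 2, nsmul_eq_mul]
  have h := sum_congr rfl fun d (_ : d ∈ univ) =>
    congrArg (conj (G.dartOutSum x d.fst) * ·) (sq_sub_one_mul_eq_of_nbMatrix_mulVec_eq hx d)
  rw [hL, hR] at h
  push_cast
  linear_combination h

end SimpleGraph

theorem one_le_abs_eigenvalue_nbMatrix_general {V : Type*} [Fintype V] [DecidableEq V]
    (G : SimpleGraph V) [DecidableRel G.Adj]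
    (hdeg : ∀ v : V, 2 ≤ G.degree v) :
    ∀ μ ∈ spectrum ℂ (nbMatrix G), 1 ≤ ‖μ‖ := by
  intro μ hμ
  obtain ⟨x, hx0, hx⟩ := exists_mulVec_eq_smul_of_mem_spectrum hμ
  by_cases hg : G.dartOutSum x = 0
  · have hμ2 := G.sq_eq_one_of_dartOutSum_eq_zero hx hx0 hg
    exact (one_le_sq_iff₀ (norm_nonneg μ)).mp (by rw [← norm_pow, hμ2, norm_one])
  obtain ⟨v₀, hv₀⟩ := Function.ne_iff.mp hg
  have hS : 0 < ∑ v, ‖G.dartOutSum x v‖ ^ 2 :=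
    sum_pos' (fun v _ => by positivity) ⟨v₀, mem_univ v₀, pow_pos (norm_pos_iff.2 hv₀) 2⟩
  have hQ : 2 * ∑ v, ‖G.dartOutSum x v‖ ^ 2 ≤ ∑ v, G.degree v * ‖G.dartOutSum x v‖ ^ 2 := by
    rw [mul_sum]
    exact sum_le_sum fun v _ =>
      mul_le_mul_of_nonneg_right (mod_cast hdeg v) (sq_nonneg _)
  have hquad := G.ihara_quadratic_of_nbMatrix_mulVec_eq hx
  rw [← Complex.conj_eq_iff_re.mp (G.conj_sum_dart_conj_mul _)] at hquad
  exact Complex.one_le_norm_of_quadratic_eq_zero hS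
    ((Complex.abs_re_le_norm _).trans (G.norm_sum_dart_conj_mul_le _)) hQ (mod_cast hquad)

/-- If `G` is a connected graph with minimum degree at least 2, then every eigenvalue `μ` of
its non-backtracking matrix satisfies `|μ| ≥ 1`. -/
theorem one_le_abs_eigenvalue_nbMatrix {V : Type*} [Fintype V] [DecidableEq V]
    (G : SimpleGraph V) [DecidableRel G.Adj] (hconn : G.Connected)
    (hdeg : ∀ v : V, 2 ≤ G.degree v) :
    ∀ μ ∈ spectrum ℂ (nbMatrix G), 1 ≤ ‖μ‖ :=
  one_le_abs_eigenvalue_nbMatrix_general G hdeg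
end

section
/- If G is a tree, then 1, −1, and 0 are all eigenvalues of K = [[A, D−I],[−I, 0]], and the eigenvalue 0 has multiplicity at least r, where r is the number of leaves (degree-1 vertices) of G. -/
/-! `K = [[A, D - 1], [-1, 0]]` linearizes the quadratic matrix polynomial `X² - X A + (D - 1)`:
since the lower blocks `1` and `X` of `X - K` commute, `charpoly K = det (X² - X A + (D - 1))`.
At `X = 1` and `X = -1` this is the Laplacian `D - A` and the signless Laplacian `D + A`, singular
for every graph and every bipartite graph respectively. A leaf `v` has `D v v - 1 = 0`, so its row
is divisible by `X`, and `X ^ #leaves` divides the characteristic polynomial. -/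

open Matrix Polynomial

namespace Matrix

variable {n R : Type*} [DecidableEq n] [CommRing R]

noncomputable def quadraticPencil (A B : Matrix n n R) : Matrix n n R[X] :=
  (X ^ 2 : R[X]) • 1 - (X : R[X]) • A.map C + B.map C

theorem X_dvd_quadraticPencil_apply {A B : Matrix n n R} {i : n} (hB : ∀ j, B i j = 0) (j : n) :
    X ∣ quadraticPencil A B i j := by
  simp only [quadraticPencil, sub_apply, add_apply, smul_apply, smul_eq_mul, map_apply, hB,
    map_zero, add_zero]
  exact dvd_sub (dvd_mul_of_dvd_left (dvd_pow_self X two_ne_zero) _) (dvd_mul_right _ _)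

variable [Fintype n]

theorem det_fromBlocks_of_commute [IsDomain R] {A B C D : Matrix n n R} (hCD : Commute C D)
    (hD : D.det ≠ 0) : (fromBlocks A B C D).det = (A * D - B * C).det := by
  have hcol : fromBlocks A B C D * fromBlocks D 0 (-C) 1 = fromBlocks (A * D - B * C) B 0 D := by
    simp [fromBlocks_multiply, hCD.eq, sub_eq_add_neg]
  have hdet := congrArg det hcol
  rw [det_mul, det_fromBlocks_zero₁₂, det_fromBlocks_zero₂₁, det_one, mul_one] at hdet
  exact mul_right_cancel₀ hD hdet

theorem pow_card_dvd_det_of_forall_dvd (M : Matrix n n R) (s : Finset n) (p : R)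
    (h : ∀ i ∈ s, ∀ j, p ∣ M i j) : p ^ s.card ∣ M.det := by
  choose! q hq using h
  let N : Matrix n n R := of fun i j => if i ∈ s then q i j else M i j
  have hM : M = of fun i j => (if i ∈ s then p else 1) * N i j := by
    ext i j
    by_cases hi : i ∈ s <;> simp [N, hi, ← hq]
  rw [hM, det_mul_column, Finset.prod_ite_mem, Finset.univ_inter, Finset.prod_const]
  exact dvd_mul_right _ _

theorem charpoly_fromBlocks_neg_one_zero [IsDomain R] (A B : Matrix n n R) :
    (fromBlocks A B (-1) 0).charpoly = (quadraticPencil A B).det := by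
  have hX : charmatrix (0 : Matrix n n R) = (X : R[X]) • 1 := by
    ext i j
    by_cases h : i = j <;> simp [charmatrix, h]
  have hC : -((-1 : Matrix n n R).map C) = 1 := by
    ext i j : 1
    by_cases h : i = j <;> simp [one_apply, h]
  rw [charpoly, charmatrix_fromBlocks, hX, hC,
    det_fromBlocks_of_commute (Commute.one_left _) (by simp [X_ne_zero])]
  congr 1
  ext i j : 1
  by_cases h : i = j
  · simp [quadraticPencil, charmatrix, h]
    ring
  · simp [quadraticPencil, charmatrix, h]

theorem eval_det_quadraticPencil (A B : Matrix n n R) (μ : R) :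
    (quadraticPencil A B).det.eval μ = (μ ^ 2 • (1 : Matrix n n R) - μ • A + B).det := by
  rw [← coe_evalRingHom, RingHom.map_det]
  congr 1
  ext i j
  by_cases h : i = j <;> simp [quadraticPencil, h, mul_comm μ]

theorem card_le_rootMultiplicity_zero_charpoly_fromBlocks [IsDomain R] (A B : Matrix n n R)
    (s : Finset n) (hs : ∀ i ∈ s, ∀ j, B i j = 0) :
    s.card ≤ (fromBlocks A B (-1) 0).charpoly.rootMultiplicity 0 := by
  rw [le_rootMultiplicity_iff (charpoly_monic _).ne_zero, C_0, sub_zero,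
    charpoly_fromBlocks_neg_one_zero]
  exact pow_card_dvd_det_of_forall_dvd _ s X fun i hi => X_dvd_quadraticPencil_apply (hs i hi)

theorem mem_spectrum_fromBlocks_neg_one_zero_iff {K : Type*} [Field K] (A B : Matrix n n K)
    (μ : K) :
    μ ∈ spectrum K (fromBlocks A B (-1 : Matrix n n K) 0) ↔
      ∃ v ≠ 0, (μ ^ 2 • (1 : Matrix n n K) - μ • A + B) *ᵥ v = 0 := by
  rw [mem_spectrum_iff_isRoot_charpoly, charpoly_fromBlocks_neg_one_zero, IsRoot,
    eval_det_quadraticPencil, exists_mulVec_eq_zero_iff]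

end Matrix

namespace SimpleGraph

theorem Colorable.exists_neg_of_adj {V R : Type*} [Ring R] [Nontrivial R] {G : SimpleGraph V}
    (hG : G.Colorable 2) : ∃ x : V → R, (∀ v, x v ≠ 0) ∧ ∀ ⦃v w⦄, G.Adj v w → x w = -x v := by
  obtain ⟨c⟩ := hG
  refine ⟨fun v => if c v = 0 then 1 else -1, fun v => ?_, fun v w hvw => ?_⟩
  · dsimp only
    split_ifs <;> simp
  · have hne := c.valid hvw
    dsimp only
    generalize c v = a at hne ⊢
    generalize c w = b at hne ⊢
    fin_cases a <;> fin_cases b <;> simp_all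

variable {V : Type*} [Fintype V] [DecidableEq V] (G : SimpleGraph V) [DecidableRel G.Adj]

theorem Kmatrix_eq_fromBlocks :
    Kmatrix G = fromBlocks (G.adjMatrix ℂ) (G.degMatrix ℂ - 1) (-1) 0 := rfl

theorem one_mem_spectrum_Kmatrix [Nonempty V] : (1 : ℂ) ∈ spectrum ℂ (Kmatrix G) := by
  rw [Kmatrix_eq_fromBlocks, mem_spectrum_fromBlocks_neg_one_zero_iff]
  refine ⟨fun _ => 1, fun h => one_ne_zero (congrFun h (Classical.arbitrary V)), ?_⟩
  have hlap : (1 : ℂ) ^ 2 • 1 - (1 : ℂ) • G.adjMatrix ℂ + (G.degMatrix ℂ - 1) = G.lapMatrix ℂ := by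
    rw [lapMatrix, one_pow, one_smul, one_smul]
    abel
  rw [hlap, lapMatrix_mulVec_const_eq_zero]

theorem signlessLaplacian_mulVec_eq_zero {R : Type*} [Ring R] {x : V → R}
    (hx : ∀ ⦃v w⦄, G.Adj v w → x w = -x v) : (G.degMatrix R + G.adjMatrix R) *ᵥ x = 0 := by
  ext v
  rw [add_mulVec, Pi.add_apply, degMatrix_mulVec_apply, adjMatrix_mulVec_apply,
    Finset.sum_congr rfl fun w hw => hx ((mem_neighborFinset G v w).mp hw)]
  simp

theorem neg_one_mem_spectrum_Kmatrix_of_colorable_two [Nonempty V] (hG : G.Colorable 2) :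
    (-1 : ℂ) ∈ spectrum ℂ (Kmatrix G) := by
  obtain ⟨x, hx0, hx⟩ := hG.exists_neg_of_adj (R := ℂ)
  have hsignless : (-1 : ℂ) ^ 2 • 1 - (-1 : ℂ) • G.adjMatrix ℂ + (G.degMatrix ℂ - 1) =
      G.degMatrix ℂ + G.adjMatrix ℂ := by
    rw [neg_one_sq, one_smul, neg_one_smul, sub_neg_eq_add]
    abel
  rw [Kmatrix_eq_fromBlocks, mem_spectrum_fromBlocks_neg_one_zero_iff, hsignless]
  exact ⟨x, fun h => hx0 (Classical.arbitrary V) (congrFun h _),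
    G.signlessLaplacian_mulVec_eq_zero hx⟩

theorem card_leaves_le_rootMultiplicity_Kmatrix :
    Fintype.card {v : V // G.degree v = 1} ≤ (Kmatrix G).charpoly.rootMultiplicity 0 := by
  rw [Fintype.card_subtype, Kmatrix_eq_fromBlocks]
  refine card_le_rootMultiplicity_zero_charpoly_fromBlocks _ _ _ fun i hi j => ?_
  obtain ⟨-, hleaf⟩ := Finset.mem_filter.mp hi
  rcases eq_or_ne i j with rfl | h
  · simp [degMatrix, hleaf]
  · simp [degMatrix, h]

end SimpleGraph

/-- If `G` is a tree on at least two vertices, then `1`, `-1` and `0` are eigenvalues of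
`K = [[A, D-I], [-I, 0]]`, and the eigenvalue `0` has (algebraic) multiplicity at least the
number of leaves of `G`. -/
theorem spectrum_Kmatrix_tree {V : Type*} [Fintype V] [DecidableEq V] (G : SimpleGraph V)
    [DecidableRel G.Adj] (hT : G.IsTree) (hcard : 2 ≤ Fintype.card V) :
    (1 : ℂ) ∈ spectrum ℂ (Kmatrix G) ∧
    (-1 : ℂ) ∈ spectrum ℂ (Kmatrix G) ∧
    (0 : ℂ) ∈ spectrum ℂ (Kmatrix G) ∧
    Fintype.card {v : V // G.degree v = 1}
      ≤ (Kmatrix G).charpoly.rootMultiplicity 0 := by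
  have : Nontrivial V := Fintype.one_lt_card_iff_nontrivial.mp hcard
  obtain ⟨ℓ, hℓ⟩ := hT.exists_vert_degree_one_of_nontrivial
  have hleaves : 0 < Fintype.card {v : V // G.degree v = 1} := Fintype.card_pos_iff.mpr ⟨⟨ℓ, hℓ⟩⟩
  have hmult := G.card_leaves_le_rootMultiplicity_Kmatrix
  refine ⟨G.one_mem_spectrum_Kmatrix, G.neg_one_mem_spectrum_Kmatrix_of_colorable_two
    hT.colorable_two, ?_, hmult⟩
  rw [mem_spectrum_iff_isRoot_charpoly, ← rootMultiplicity_pos (charpoly_monic _).ne_zero]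
  omega
end
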